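/- arXiv:1009.1825 — 2 statements merged into one kernel-verified Lean document; each statement's English description precedes it below -/
import Mathlib

section
/- Let X = Y = [0,1] with μ = ν the Lebesgue measure, and define c(x,y) = 0 if y < x, c(x,y) = 1 if x = y, and c(x,y) = ∞ if x < y. If φ : [0,1] → [-∞,∞) and ψ : [0,1] → [-∞,∞) satisfy φ(x) + ψ(y) ≤ c(x,y) for all x, y, then the set {x ∈ [0,1] : φ(x) + ψ(x) > 0} is countable. Consequently, the dual value D_c = sup{∫φ dμ + ∫ψ dν : φ ∈ L¹(μ), ψ ∈ L¹(ν), φ ⊕ ψ ≤ c} equals 0, and there is a duality gap: D_c = 0 < 1 = P_c. -/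
open MeasureTheory Set

/-- Lebesgue measure on `[0,1]`. -/
noncomputable def muI : Measure ℝ := volume.restrict (Set.Icc 0 1)

/-- The cost: `0` below the diagonal, `1` on the diagonal, `∞` above. -/
noncomputable def c0 : ℝ × ℝ → ENNReal := fun p =>
  if p.2 < p.1 then 0 else if p.1 = p.2 then 1 else ⊤

/-!
For `y < x` an admissible pair satisfies `φ x + ψ y ≤ 0`, i.e. `φ x ≤ -ψ y`. Choosing a rational
strictly between `-ψ x` and `φ x` at every `x` with `φ x + ψ x > 0` therefore gives a strictly
decreasing, hence injective, map into `ℚ`. A countable set is Lebesgue-null, so `φ + ψ ≤ 0` a.e.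
and every dual value is `≤ 0`.

A coupling of finite cost lives on `{y ≤ x}`. As both marginals coincide, `{x ≤ q}` and `{y ≤ q}`
have the same mass, so the coupling does not charge `{y ≤ q < x}` for rational `q`; hence it lives
on the diagonal, where the cost is `1`.
-/

theorem EReal.pos_add_iff_neg_lt {a b : EReal} : 0 < a + b ↔ -b < a := by
  induction a using EReal.rec <;> induction b using EReal.rec <;> try simp
  · norm_cast
    rw [neg_lt_iff_pos_add, add_comm]
  · exact (EReal.coe_neg _ ▸ EReal.coe_lt_top _)

theorem countable_setOf_pos_add {α : Type*} [LinearOrder α] {s : Set α} {f g : α → EReal}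
    (h : ∀ x ∈ s, ∀ y ∈ s, y < x → f x + g y ≤ 0) : {x ∈ s | 0 < f x + g x}.Countable := by
  set t := {x ∈ s | 0 < f x + g x}
  have hq : ∀ x ∈ t, ∃ q : ℚ, -g x < (q : ℝ) ∧ ((q : ℝ) : EReal) < f x := fun x hx ↦
    EReal.lt_iff_exists_rat_btwn.1 (EReal.pos_add_iff_neg_lt.1 hx.2)
  choose! q hq_gt hq_lt using hq
  have hanti : StrictAntiOn q t := by
    intro y hy x hx hyx
    have hfg : f x ≤ -g y := not_lt.1 fun hlt ↦
      (h x hx.1 y hy.1 hyx).not_gt (EReal.pos_add_iff_neg_lt.2 hlt)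
    exact_mod_cast (hq_lt x hx).trans (hfg.trans_lt (hq_gt y hy))
  exact (mapsTo_univ q t).countable_of_injOn hanti.injOn countable_univ

theorem c0_of_lt {x y : ℝ} (h : y < x) : c0 (x, y) = 0 := if_pos h

theorem countable_setOf_pos_add_of_le_c0 {s : Set ℝ} {φ ψ : ℝ → EReal}
    (hc : ∀ x ∈ s, ∀ y ∈ s, φ x + ψ y ≤ (c0 (x, y) : EReal)) :
    {x ∈ s | 0 < φ x + ψ x}.Countable :=
  countable_setOf_pos_add fun x hx y hy hyx ↦ by simpa [c0_of_lt hyx] using hc x hx y hy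

theorem integral_add_integral_nonpos_of_le_c0 {φ ψ : ℝ → ℝ}
    (hφ : Integrable φ muI) (hψ : Integrable ψ muI)
    (hc : ∀ x ∈ Icc (0:ℝ) 1, ∀ y ∈ Icc (0:ℝ) 1,
      (φ x : EReal) + (ψ y : EReal) ≤ (c0 (x, y) : EReal)) :
    ∫ x, φ x ∂muI + ∫ y, ψ y ∂muI ≤ 0 := by
  have hcount : {x ∈ Icc (0:ℝ) 1 | 0 < (φ x : EReal) + ψ x}.Countable :=
    countable_setOf_pos_add_of_le_c0 hc
  have hnonpos : ∀ᵐ x ∂muI, φ x + ψ x ≤ 0 := by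
    rw [muI]
    filter_upwards [ae_restrict_mem measurableSet_Icc,
      measure_eq_zero_iff_ae_notMem.1 (hcount.measure_zero _)] with x hx hxt
    by_contra! hpos
    exact hxt ⟨hx, by exact_mod_cast hpos⟩
  rw [← integral_add hφ hψ]
  exact integral_nonpos_of_ae hnonpos

theorem measurable_c0 : Measurable c0 :=
  Measurable.ite (measurableSet_lt measurable_snd measurable_fst) measurable_const <|
    Measurable.ite (measurableSet_eq_fun measurable_fst measurable_snd) measurable_const
      measurable_const

theorem c0_lt_top_iff {p : ℝ × ℝ} : c0 p < ⊤ ↔ p.2 ≤ p.1 := by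
  rcases lt_trichotomy p.1 p.2 with h | h | h
  · simp [c0, h, h.not_gt, h.ne]
  · simp [c0, h]
  · simp [c0, h, h.le]

theorem c0_self (x : ℝ) : c0 (x, x) = 1 := by simp [c0]

theorem ae_fst_eq_snd_of_ae_snd_le_fst {π : Measure (ℝ × ℝ)} [IsFiniteMeasure π]
    (hmap : π.map Prod.fst = π.map Prod.snd) (hle : ∀ᵐ p ∂π, p.2 ≤ p.1) :
    ∀ᵐ p ∂π, p.1 = p.2 := by
  have hcdf (q : ℚ) : π ({p | p.2 ≤ q} \ {p | p.1 ≤ q}) = 0 := by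
    have hsub : {p : ℝ × ℝ | p.1 ≤ q} ≤ᵐ[π] {p | p.2 ≤ q} := by
      filter_upwards [hle] with p hp h1 using hp.trans h1
    have hmeas : π {p : ℝ × ℝ | p.1 ≤ q} = π {p | p.2 ≤ q} := by
      have := congrArg (· (Iic (q : ℝ))) hmap
      rwa [Measure.map_apply measurable_fst measurableSet_Iic,
        Measure.map_apply measurable_snd measurableSet_Iic] at this
    exact (ae_eq_set.1 (ae_eq_of_ae_subset_of_measure_ge hsub hmeas.ge
      (measurableSet_le measurable_fst measurable_const).nullMeasurableSet
      (measure_ne_top _ _))).2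
  have hlt : π {p : ℝ × ℝ | p.2 < p.1} = 0 := by
    refine measure_mono_null (fun p (hp : p.2 < p.1) ↦ ?_) (measure_iUnion_null hcdf)
    obtain ⟨q, h2q, hq1⟩ := exists_rat_btwn hp
    exact mem_iUnion.2 ⟨q, h2q.le, hq1.not_ge⟩
  filter_upwards [hle, measure_eq_zero_iff_ae_notMem.1 hlt] with p h1 h2
  exact le_antisymm (not_lt.1 h2) h1

theorem measure_univ_le_lintegral_c0 {π : Measure (ℝ × ℝ)} [IsFiniteMeasure π]
    (hmap : π.map Prod.fst = π.map Prod.snd) : π univ ≤ ∫⁻ p, c0 p ∂π := by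
  by_cases htop : ∫⁻ p, c0 p ∂π = ⊤
  · exact htop ▸ le_top
  have hdiag : ∀ᵐ p ∂π, p.1 = p.2 := ae_fst_eq_snd_of_ae_snd_le_fst hmap <|
    (ae_lt_top measurable_c0 htop).mono fun _ ↦ c0_lt_top_iff.1
  have hc0 : c0 =ᵐ[π] 1 := hdiag.mono fun p (hp : p.1 = p.2) ↦ by
    rw [← Prod.mk.eta (p := p), ← hp, c0_self, Pi.one_apply]
  rw [lintegral_congr_ae hc0, Pi.one_def, lintegral_one]

theorem lintegral_c0_map_diag (μ : Measure ℝ) :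
    ∫⁻ p, c0 p ∂(μ.map Function.diag) = μ univ := by
  simp [lintegral_map measurable_c0 measurable_diag, c0_self]

theorem iInf_lintegral_c0_coupling (μ : Measure ℝ) [IsFiniteMeasure μ] :
    (⨅ π ∈ {π : Measure (ℝ × ℝ) | π.map Prod.fst = μ ∧ π.map Prod.snd = μ},
      ∫⁻ p, c0 p ∂π) = μ univ := by
  refine le_antisymm ?_ (le_iInf₂ fun π ⟨h1, h2⟩ ↦ ?_)
  · refine iInf₂_le_of_le (μ.map Function.diag) ⟨?_, ?_⟩ (lintegral_c0_map_diag μ).le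
    · exact (Measure.map_map measurable_fst measurable_diag).trans Measure.map_id
    · exact (Measure.map_map measurable_snd measurable_diag).trans Measure.map_id
  · have : IsFiniteMeasure (π.map Prod.fst) := h1 ▸ inferInstance
    have : IsFiniteMeasure π := Measure.isFiniteMeasure_of_map measurable_fst.aemeasurable
    calc μ univ = π univ := by rw [← h1, Measure.map_apply measurable_fst .univ, preimage_univ]
      _ ≤ ∫⁻ p, c0 p ∂π := measure_univ_le_lintegral_c0 (h1.trans h2.symm)

theorem stmt1 :
    -- any admissible dual pair is positive on at most countably many diagonal points
    (∀ φ ψ : ℝ → EReal, (∀ x, φ x ≠ ⊤) → (∀ y, ψ y ≠ ⊤) →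
      (∀ x ∈ Set.Icc (0:ℝ) 1, ∀ y ∈ Set.Icc (0:ℝ) 1, φ x + ψ y ≤ (c0 (x, y) : EReal)) →
      {x ∈ Set.Icc (0:ℝ) 1 | 0 < φ x + ψ x}.Countable) ∧
    -- the dual value is 0
    sSup {r : EReal | ∃ φ ψ : ℝ → ℝ, Integrable φ muI ∧ Integrable ψ muI ∧
      (∀ x ∈ Set.Icc (0:ℝ) 1, ∀ y ∈ Set.Icc (0:ℝ) 1,
        (φ x : EReal) + (ψ y : EReal) ≤ (c0 (x, y) : EReal)) ∧
      r = ((∫ x, φ x ∂muI + ∫ y, ψ y ∂muI : ℝ) : EReal)} = 0 ∧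
    -- while the primal value is 1 : there is a duality gap 0 < 1
    (⨅ π ∈ {π : Measure (ℝ × ℝ) | π.map Prod.fst = muI ∧ π.map Prod.snd = muI},
      ∫⁻ p, c0 p ∂π) = 1 := by
  refine ⟨fun φ ψ _ _ ↦ countable_setOf_pos_add_of_le_c0, ?_, ?_⟩
  · refine le_antisymm (sSup_le ?_) (le_sSup ⟨0, 0, integrable_zero _ _ _,
      integrable_zero _ _ _, fun x _ y _ ↦ ?_, by simp⟩)
    · rintro r ⟨φ, ψ, hφ, hψ, hc, rfl⟩
      exact_mod_cast integral_add_integral_nonpos_of_le_c0 hφ hψ hc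
    · simpa using EReal.coe_ennreal_nonneg _
  · have : IsFiniteMeasure muI := by rw [muI]; infer_instance
    simpa [muI] using iInf_lintegral_c0_coupling muI
end

section
/- Let X, Y be Polish spaces with Borel probability measures μ, ν, and c : X × Y → [0,∞] Borel with rectification c_r. Then the dual values coincide: D_c = D_{c_r}, where D_d := sup{∫φ dμ + ∫ψ dν : φ ∈ L¹(μ), ψ ∈ L¹(ν), φ ⊕ ψ ≤ d everywhere}. -/
open MeasureTheory Set

/-- A set `A ⊆ X × Y` is `L`-negligible (w.r.t. `μ`, `ν`). -/
def LNeg {X Y : Type*} [MeasurableSpace X] [MeasurableSpace Y]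
    (μ : Measure X) (ν : Measure Y) (A : Set (X × Y)) : Prop :=
  ∃ M : Set X, ∃ N : Set Y, MeasurableSet M ∧ MeasurableSet N ∧ μ M = 0 ∧ ν N = 0 ∧
    A ⊆ (M ×ˢ (Set.univ : Set Y)) ∪ ((Set.univ : Set X) ×ˢ N)

/-- Property (i) of a rectification: every Borel dual pair `φ ⊕ ψ ≤ c` satisfies
`φ ⊕ ψ ≤ d` `L`-almost surely. -/
def SatI {X Y : Type*} [MeasurableSpace X] [MeasurableSpace Y]
    (μ : Measure X) (ν : Measure Y) (c : X × Y → ENNReal) (d : X × Y → ENNReal) : Prop :=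
  ∀ φ : X → EReal, ∀ ψ : Y → EReal, Measurable φ → Measurable ψ →
    (∀ x, φ x ≠ ⊤) → (∀ y, ψ y ≠ ⊤) →
    (∀ x y, φ x + ψ y ≤ (c (x, y) : EReal)) →
    LNeg μ ν {p : X × Y | ¬ φ p.1 + ψ p.2 ≤ (d p : EReal)}

/-- `cr` is a rectification of `c`: it satisfies (i) and is `L`-a.s. minimal with it. -/
def IsRectification {X Y : Type*} [MeasurableSpace X] [MeasurableSpace Y]
    (μ : Measure X) (ν : Measure Y) (c cr : X × Y → ENNReal) : Prop :=
  SatI μ ν c cr ∧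
    ∀ d : X × Y → ENNReal, SatI μ ν c d → LNeg μ ν {p : X × Y | ¬ cr p ≤ d p}

/-- The dual Monge–Kantorovich value of a cost `d`, as an extended real. -/
noncomputable def Dval {X Y : Type*} [MeasurableSpace X] [MeasurableSpace Y]
    (μ : Measure X) (ν : Measure Y) (d : X × Y → ENNReal) : EReal :=
  sSup {r : EReal | ∃ φ : X → ℝ, ∃ ψ : Y → ℝ, Integrable φ μ ∧ Integrable ψ ν ∧
    (∀ x y, (φ x : EReal) + (ψ y : EReal) ≤ (d (x, y) : EReal)) ∧
    r = ((∫ x, φ x ∂μ + ∫ y, ψ y ∂ν : ℝ) : EReal)}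

/-- The primal Monge–Kantorovich value of a cost `d`, as an extended real. -/
noncomputable def Pval {X Y : Type*} [MeasurableSpace X] [MeasurableSpace Y]
    (μ : Measure X) (ν : Measure Y) (d : X × Y → ENNReal) : EReal :=
  ⨅ π ∈ {π : Measure (X × Y) | π.map Prod.fst = μ ∧ π.map Prod.snd = ν},
    ((∫⁻ p, d p ∂π : ENNReal) : EReal)

/-!
An admissible pair for `c` agrees a.e. with a Borel pair that takes the value `-∞` on null sets
and is still admissible for `c`, so property (i) gives `φ ⊕ ψ ≤ c_r` off an `L`-negligible set.
Conversely, minimality applied to `d = c` gives `c_r ≤ c` off such a set. Either way it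
remains to see that a pair satisfying the constraint `L`-a.s. has value at most the dual value:
truncating it at level `n` and setting it to `-n` on the exceptional null sets yields
admissible pairs whose values converge by dominated convergence.
-/

open Filter Topology

section Truncation

variable {Z : Type*} [MeasurableSpace Z] {μ : Measure Z} {f : Z → ℝ}

lemma abs_min_le_abs_of_nonneg {a b : ℝ} (hb : 0 ≤ b) : |min a b| ≤ |a| := by
  rcases le_total a b with hab | hba
  · rw [min_eq_left hab]
  · rw [min_eq_right hba, abs_of_nonneg hb]
    exact hba.trans (le_abs_self a)

lemma MeasureTheory.Integrable.min_natCast (hf : Integrable f μ) (n : ℕ) :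
    Integrable (fun z => min (f z) n) μ :=
  hf.abs.mono' (hf.aestronglyMeasurable.inf aestronglyMeasurable_const)
    (ae_of_all _ fun _ => abs_min_le_abs_of_nonneg n.cast_nonneg)

lemma tendsto_integral_min_natCast (hf : Integrable f μ) :
    Tendsto (fun n : ℕ => ∫ z, min (f z) n ∂μ) atTop (𝓝 (∫ z, f z ∂μ)) := by
  refine tendsto_integral_of_dominated_convergence (fun z => |f z|)
    (fun n => (hf.min_natCast n).aestronglyMeasurable) hf.abs
    (fun n => ae_of_all _ fun _ => abs_min_le_abs_of_nonneg n.cast_nonneg) (ae_of_all _ ?_)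
  intro z
  refine tendsto_const_nhds.congr' ?_
  filter_upwards [eventually_ge_atTop ⌈f z⌉₊] with n hn
  exact (min_eq_left ((Nat.le_ceil _).trans (by exact_mod_cast hn))).symm

end Truncation

section Negligible

variable {X Y : Type*} [MeasurableSpace X] [MeasurableSpace Y] {μ : Measure X} {ν : Measure Y}
  {A B : Set (X × Y)}

lemma LNeg.mono (hB : LNeg μ ν B) (hAB : A ⊆ B) : LNeg μ ν A := by
  obtain ⟨M, N, hM, hN, hM0, hN0, hB⟩ := hB
  exact ⟨M, N, hM, hN, hM0, hN0, hAB.trans hB⟩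

lemma LNeg.union (hA : LNeg μ ν A) (hB : LNeg μ ν B) : LNeg μ ν (A ∪ B) := by
  obtain ⟨M, N, hM, hN, hM0, hN0, hA⟩ := hA
  obtain ⟨M', N', hM', hN', hM0', hN0', hB⟩ := hB
  refine ⟨M ∪ M', N ∪ N', hM.union hM', hN.union hN', measure_union_null hM0 hM0',
    measure_union_null hN0 hN0', union_subset ?_ ?_⟩
  · exact hA.trans (union_subset_union (prod_mono subset_union_left le_rfl)
      (prod_mono le_rfl subset_union_left))
  · exact hB.trans (union_subset_union (prod_mono subset_union_right le_rfl)
      (prod_mono le_rfl subset_union_right))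

lemma lNeg_preimage_fst {s : Set X} (hs : μ s = 0) : LNeg μ ν (Prod.fst ⁻¹' s) :=
  ⟨toMeasurable μ s, ∅, measurableSet_toMeasurable _ _, .empty, by rwa [measure_toMeasurable],
    measure_empty, fun p hp => Or.inl ⟨subset_toMeasurable _ _ hp, trivial⟩⟩

lemma lNeg_preimage_snd {t : Set Y} (ht : ν t = 0) : LNeg μ ν (Prod.snd ⁻¹' t) :=
  ⟨∅, toMeasurable ν t, .empty, measurableSet_toMeasurable _ _, measure_empty,
    by rwa [measure_toMeasurable], fun p hp => Or.inr ⟨trivial, subset_toMeasurable _ _ hp⟩⟩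

end Negligible

section Duality

variable {X Y : Type*} [MeasurableSpace X] [MeasurableSpace Y] {μ : Measure X} {ν : Measure Y}
  {φ : X → ℝ} {ψ : Y → ℝ}

lemma coe_integral_add_le_Dval {d : X × Y → ENNReal} (hφ : Integrable φ μ) (hψ : Integrable ψ ν)
    (hle : ∀ x y, (φ x : EReal) + ψ y ≤ d (x, y)) :
    ((∫ x, φ x ∂μ + ∫ y, ψ y ∂ν : ℝ) : EReal) ≤ Dval μ ν d :=
  le_sSup ⟨φ, ψ, hφ, hψ, hle, rfl⟩

lemma coe_add_le_coe_ennreal_of_le_zero {a b : ℝ} (hab : a + b ≤ 0) (e : ENNReal) :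
    (a : EReal) + b ≤ e := by
  rw [← EReal.coe_add]
  exact (EReal.coe_le_coe_iff.2 hab).trans (EReal.coe_ennreal_nonneg e)

lemma coe_integral_add_le_Dval_of_lNeg (d : X × Y → ENNReal) (hφ : Integrable φ μ)
    (hψ : Integrable ψ ν) (h : LNeg μ ν {p | ¬ (φ p.1 : EReal) + ψ p.2 ≤ d p}) :
    ((∫ x, φ x ∂μ + ∫ y, ψ y ∂ν : ℝ) : EReal) ≤ Dval μ ν d := by
  classical
  obtain ⟨M, N, -, -, hM0, hN0, hsub⟩ := h
  have htrunc (n : ℕ) :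
      ((∫ x, min (φ x) n ∂μ + ∫ y, min (ψ y) n ∂ν : ℝ) : EReal) ≤ Dval μ ν d := by
    let φn : X → ℝ := fun x => if x ∈ M then -n else min (φ x) n
    let ψn : Y → ℝ := fun y => if y ∈ N then -n else min (ψ y) n
    have hφn : φn =ᵐ[μ] fun x => min (φ x) n := ite_ae_eq_of_measure_zero _ _ _ hM0
    have hψn : ψn =ᵐ[ν] fun y => min (ψ y) n := ite_ae_eq_of_measure_zero _ _ _ hN0
    have hφn_le (x : X) : φn x ≤ n := by
      by_cases hx : x ∈ M <;> simp [φn, hx]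
    have hψn_le (y : Y) : ψn y ≤ n := by
      by_cases hy : y ∈ N <;> simp [ψn, hy]
    rw [← integral_congr_ae hφn, ← integral_congr_ae hψn]
    refine coe_integral_add_le_Dval ((hφ.min_natCast n).congr hφn.symm)
      ((hψ.min_natCast n).congr hψn.symm) fun x y => ?_
    by_cases hx : x ∈ M
    · exact coe_add_le_coe_ennreal_of_le_zero (by simp only [φn, if_pos hx]; linarith [hψn_le y]) _
    by_cases hy : y ∈ N
    · exact coe_add_le_coe_ennreal_of_le_zero (by simp only [ψn, if_pos hy]; linarith [hφn_le x]) _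
    have hgood : (φ x : EReal) + ψ y ≤ d (x, y) := by
      by_contra hbad
      rcases hsub (show (x, y) ∈ _ from hbad) with hx' | hy'
      exacts [hx hx'.1, hy hy'.2]
    refine le_trans ?_ hgood
    rw [← EReal.coe_add, ← EReal.coe_add, EReal.coe_le_coe_iff]
    simp only [φn, ψn, if_neg hx, if_neg hy]
    exact add_le_add (min_le_left _ _) (min_le_left _ _)
  exact le_of_tendsto (EReal.tendsto_coe.2 ((tendsto_integral_min_natCast hφ).add
    (tendsto_integral_min_natCast hψ))) (Eventually.of_forall htrunc)

lemma AEMeasurable.exists_measurable_ereal_le (hφ : AEMeasurable φ μ) :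
    ∃ Φ : X → EReal, Measurable Φ ∧ (∀ x, Φ x ≠ ⊤) ∧ (∀ x, Φ x ≤ φ x) ∧
      μ {x | Φ x ≠ φ x} = 0 := by
  classical
  obtain ⟨g, hgm, hφg⟩ := hφ
  set A := toMeasurable μ {x | φ x ≠ g x}
  have hA0 : μ A = 0 := by rw [measure_toMeasurable]; exact hφg
  have hφA (x : X) (hx : x ∉ A) : φ x = g x :=
    not_not.1 fun hne => hx (subset_toMeasurable _ _ hne)
  refine ⟨fun x => if x ∈ A then ⊥ else (g x : EReal), Measurable.ite
    (measurableSet_toMeasurable _ _) measurable_const hgm.coe_real_ereal, ?_, ?_, ?_⟩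
  · intro x
    by_cases hx : x ∈ A <;> simp [hx]
  · intro x
    by_cases hx : x ∈ A <;> simp [hx, hφA]
  · refine measure_mono_null (fun x hx => ?_) hA0
    by_contra hxA
    simp [hxA, ← hφA x hxA] at hx

lemma SatI.lNeg_of_aemeasurable {c d : X × Y → ENNReal} (hcd : SatI μ ν c d)
    (hφ : AEMeasurable φ μ) (hψ : AEMeasurable ψ ν) (hle : ∀ x y, (φ x : EReal) + ψ y ≤ c (x, y)) :
    LNeg μ ν {p | ¬ (φ p.1 : EReal) + ψ p.2 ≤ d p} := by
  obtain ⟨Φ, hΦm, hΦt, hΦφ, hΦ0⟩ := hφ.exists_measurable_ereal_le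
  obtain ⟨Ψ, hΨm, hΨt, hΨψ, hΨ0⟩ := hψ.exists_measurable_ereal_le
  have hbad := hcd Φ Ψ hΦm hΨm hΦt hΨt fun x y => (add_le_add (hΦφ x) (hΨψ y)).trans (hle x y)
  refine ((hbad.union (lNeg_preimage_fst hΦ0)).union (lNeg_preimage_snd hΨ0)).mono ?_
  rintro ⟨x, y⟩ hxy
  by_contra hgood
  simp only [mem_union, mem_ofPred_eq, mem_preimage, not_or, not_not] at hgood
  obtain ⟨⟨hΦΨ, hΦx⟩, hΨy⟩ := hgood
  exact hxy (hΦx ▸ hΨy ▸ hΦΨ)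

lemma satI_self (μ : Measure X) (ν : Measure Y) (c : X × Y → ENNReal) : SatI μ ν c c :=
  fun _ _ _ _ _ _ hle =>
    ⟨∅, ∅, .empty, .empty, measure_empty, measure_empty, fun p hp => absurd (hle p.1 p.2) hp⟩

end Duality

theorem stmt12_general {X Y : Type*}
    [MeasurableSpace X]
    [MeasurableSpace Y]
    (μ : Measure X) (ν : Measure Y)
    (c : X × Y → ENNReal) (cr : X × Y → ENNReal)
    (h : IsRectification μ ν c cr) :
    Dval μ ν c = Dval μ ν cr := by
  refine le_antisymm (sSup_le ?_) (sSup_le ?_) <;> rintro _ ⟨φ, ψ, hφ, hψ, hle, rfl⟩ <;>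
    refine coe_integral_add_le_Dval_of_lNeg _ hφ hψ ?_
  · exact h.1.lNeg_of_aemeasurable hφ.aemeasurable hψ.aemeasurable hle
  · refine (h.2 c (satI_self μ ν c)).mono fun p hp hcr => hp ((hle p.1 p.2).trans ?_)
    exact EReal.coe_ennreal_le_coe_ennreal_iff.2 hcr

/-- The dual values for `c` and for its rectification coincide. -/
theorem stmt12 {X Y : Type*}
    [TopologicalSpace X] [PolishSpace X] [MeasurableSpace X] [BorelSpace X]
    [TopologicalSpace Y] [PolishSpace Y] [MeasurableSpace Y] [BorelSpace Y]
    (μ : Measure X) (ν : Measure Y) [IsProbabilityMeasure μ] [IsProbabilityMeasure ν]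
    (c : X × Y → ENNReal) (hc : Measurable c) (cr : X × Y → ENNReal)
    (hcr : Measurable cr) (h : IsRectification μ ν c cr) :
    Dval μ ν c = Dval μ ν cr :=
  stmt12_general μ ν c cr h
end
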